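/- Define qubit channels Λ₁(ρ) = ⟨0|ρ|0⟩ |0⟩⟨0| + ⟨1|ρ|1⟩ |+⟩⟨+| and Λ₂(ρ) = ⟨+|ρ|+⟩ ρ₊ + ⟨−|ρ|−⟩ ρ₋ with ρ± = p|0⟩⟨0| + (1−p)|1⟩⟨1| and (1−p)|0⟩⟨0| + p|1⟩⟨1| respectively. For p ∈ [1/2 − 1/(2√2), 1/2 + 1/(2√2)], the explicitly given operator ρ_{AB₁B₂} = (1/4)(|000⟩⟨000| + |001⟩⟨001| + |1+0⟩⟨1+0| + |1+1⟩⟨1+1|) + (√2/2)(p−1/2)(|000⟩⟨1+0| − |001⟩⟨1+1|) + h.c. is positive semidefinite with unit trace, and its marginals ρ_{AB₁}, ρ_{AB₂} are the Choi states of Λ₁ and Λ₂. Hence Λ₁ and Λ₂ are compatible. -/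

import Mathlib

open Classical Matrix
open scoped ComplexOrder

noncomputable section

/-- `|0⟩`. -/
def e0 : Fin 2 → ℂ := fun i => if i = 0 then 1 else 0
/-- `|1⟩`. -/
def e1 : Fin 2 → ℂ := fun i => if i = 1 then 1 else 0
/-- `|+⟩ = (|0⟩ + |1⟩)/√2`. -/
def plusv : Fin 2 → ℂ := fun _ => ((Real.sqrt 2 : ℂ))⁻¹
/-- `|−⟩ = (|0⟩ − |1⟩)/√2`. -/
def minusv : Fin 2 → ℂ := fun i => if i = 0 then ((Real.sqrt 2 : ℂ))⁻¹ else -((Real.sqrt 2 : ℂ))⁻¹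

/-- Rank-one projector `|u⟩⟨u|`. -/
def proj (u : Fin 2 → ℂ) : Matrix (Fin 2) (Fin 2) ℂ := Matrix.vecMulVec u (star u)

/-- The channel `Λ₁(ρ) = ⟨0|ρ|0⟩ |0⟩⟨0| + ⟨1|ρ|1⟩ |+⟩⟨+|`. -/
def Lambda1 (ρ : Matrix (Fin 2) (Fin 2) ℂ) : Matrix (Fin 2) (Fin 2) ℂ :=
  ρ 0 0 • proj e0 + ρ 1 1 • proj plusv

/-- `ρ₊ = p|0⟩⟨0| + (1−p)|1⟩⟨1|`. -/
def rhoPlus (p : ℝ) : Matrix (Fin 2) (Fin 2) ℂ := (p : ℂ) • proj e0 + ((1 - p : ℝ) : ℂ) • proj e1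
/-- `ρ₋ = (1−p)|0⟩⟨0| + p|1⟩⟨1|`. -/
def rhoMinus (p : ℝ) : Matrix (Fin 2) (Fin 2) ℂ := ((1 - p : ℝ) : ℂ) • proj e0 + (p : ℂ) • proj e1

/-- The channel `Λ₂(ρ) = ⟨+|ρ|+⟩ ρ₊ + ⟨−|ρ|−⟩ ρ₋`. -/
def Lambda2 (p : ℝ) (ρ : Matrix (Fin 2) (Fin 2) ℂ) : Matrix (Fin 2) (Fin 2) ℂ :=
  (star plusv ⬝ᵥ ρ.mulVec plusv) • rhoPlus p + (star minusv ⬝ᵥ ρ.mulVec minusv) • rhoMinus p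

/-- Product basis vector `|uvw⟩` on `A ⊗ B₁ ⊗ B₂`. -/
def ket3 (u v w : Fin 2 → ℂ) : Fin 2 × Fin 2 × Fin 2 → ℂ :=
  fun x => u x.1 * v x.2.1 * w x.2.2

/-- The explicit tripartite operator of Appendix B of the paper. -/
def rhoBig (p : ℝ) : Matrix (Fin 2 × Fin 2 × Fin 2) (Fin 2 × Fin 2 × Fin 2) ℂ :=
  (1 / 4 : ℂ) •
      (Matrix.vecMulVec (ket3 e0 e0 e0) (star (ket3 e0 e0 e0)) +
       Matrix.vecMulVec (ket3 e0 e0 e1) (star (ket3 e0 e0 e1)) +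
       Matrix.vecMulVec (ket3 e1 plusv e0) (star (ket3 e1 plusv e0)) +
       Matrix.vecMulVec (ket3 e1 plusv e1) (star (ket3 e1 plusv e1))) +
    ((Real.sqrt 2 / 2 * (p - 1 / 2) : ℝ) : ℂ) •
      ((Matrix.vecMulVec (ket3 e0 e0 e0) (star (ket3 e1 plusv e0)) -
        Matrix.vecMulVec (ket3 e0 e0 e1) (star (ket3 e1 plusv e1))) +
       (Matrix.vecMulVec (ket3 e0 e0 e0) (star (ket3 e1 plusv e0)) -
        Matrix.vecMulVec (ket3 e0 e0 e1) (star (ket3 e1 plusv e1)))ᴴ)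

/-- Marginal on `A ⊗ B₁`. -/
def margAB₁ (ρ : Matrix (Fin 2 × Fin 2 × Fin 2) (Fin 2 × Fin 2 × Fin 2) ℂ) :
    Matrix (Fin 2 × Fin 2) (Fin 2 × Fin 2) ℂ :=
  fun x y => ∑ c, ρ (x.1, x.2, c) (y.1, y.2, c)

/-- Marginal on `A ⊗ B₂`. -/
def margAB₂ (ρ : Matrix (Fin 2 × Fin 2 × Fin 2) (Fin 2 × Fin 2 × Fin 2) ℂ) :
    Matrix (Fin 2 × Fin 2) (Fin 2 × Fin 2) ℂ :=
  fun x y => ∑ b, ρ (x.1, b, x.2) (y.1, b, y.2)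

/-- The projector `|Γ⟩⟨Γ|` onto the maximally entangled state on `A' ⊗ A`. -/
def maxEntProj (A : Type) [Fintype A] [DecidableEq A] : Matrix (A × A) (A × A) ℂ :=
  fun p q => if p.1 = p.2 ∧ q.1 = q.2 then ((Fintype.card A : ℂ))⁻¹ else 0

/-- The Choi state `ρ^Λ_{A'B} = (id_{A'} ⊗ Λ)(|Γ⟩⟨Γ|)`. -/
def choiState {A B : Type} [Fintype A] [DecidableEq A] [Fintype B] [DecidableEq B]
    (Λ : Matrix A A ℂ → Matrix B B ℂ) : Matrix (A × B) (A × B) ℂ :=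
  fun p q => Λ (Matrix.of (fun a a' => maxEntProj A (p.1, a) (q.1, a'))) p.2 q.2

end

/-! Each of the two blocks `a • (|u⟩⟨u| + |w⟩⟨w|) + t • (|u⟩⟨w| + |w⟩⟨u|)` making up `rhoBig p`
(with `a = 1/4`, `t = ±(√2/2)(p − 1/2)`) equals
`((a + t)/2) |u + w⟩⟨u + w| + ((a − t)/2) |u − w⟩⟨u − w|`, so it is positive semidefinite as soon
as `|t| ≤ a`, which is exactly the range of `p`. The marginals are partial traces of product
operators: tracing out `B₂` cancels the off-diagonal terms of `rhoBig p`, while tracing out `B₁`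
only scales them by `⟨+|0⟩ = 1/√2`. -/

theorem posSemidef_smul_vecMulVec_add_smul_of_abs_le {n : Type*} [Fintype n] (u w : n → ℂ)
    {a t : ℝ} (h : |t| ≤ a) :
    ((a : ℂ) • (vecMulVec u (star u) + vecMulVec w (star w)) +
      (t : ℂ) • (vecMulVec u (star w) + vecMulVec w (star u))).PosSemidef := by
  have diagonalize : (a : ℂ) • (vecMulVec u (star u) + vecMulVec w (star w)) +
      (t : ℂ) • (vecMulVec u (star w) + vecMulVec w (star u)) =
      (((a + t) / 2 : ℝ) : ℂ) • vecMulVec (u + w) (star (u + w)) +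
        (((a - t) / 2 : ℝ) : ℂ) • vecMulVec (u - w) (star (u - w)) := by
    simp only [star_add, star_sub, add_vecMulVec, vecMulVec_add, sub_vecMulVec, vecMulVec_sub]
    push_cast
    module
  obtain ⟨hneg, hpos⟩ := abs_le.mp h
  rw [diagonalize]
  exact ((posSemidef_vecMulVec_self_star _).smul (Complex.zero_le_real.mpr (by linarith))).add
    ((posSemidef_vecMulVec_self_star _).smul (Complex.zero_le_real.mpr (by linarith)))

theorem abs_sqrt_two_div_two_mul_sub_half_le {p : ℝ}
    (hp : p ∈ Set.Icc (1 / 2 - 1 / (2 * Real.sqrt 2)) (1 / 2 + 1 / (2 * Real.sqrt 2))) :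
    |Real.sqrt 2 / 2 * (p - 1 / 2)| ≤ 1 / 4 := by
  have hp' : |p - 1 / 2| ≤ 1 / (2 * Real.sqrt 2) :=
    abs_sub_le_iff.2 ⟨by linarith [hp.2], by linarith [hp.1]⟩
  calc |Real.sqrt 2 / 2 * (p - 1 / 2)| = Real.sqrt 2 / 2 * |p - 1 / 2| := by
        rw [abs_mul, abs_of_pos (by positivity)]
    _ ≤ Real.sqrt 2 / 2 * (1 / (2 * Real.sqrt 2)) := by gcongr
    _ = 1 / 4 := by field_simp; ring

theorem ofReal_sqrt_two_sq : ((Real.sqrt 2 : ℝ) : ℂ) ^ 2 = 2 := by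
  exact_mod_cast Real.sq_sqrt zero_le_two

theorem e0_dotProduct_star_e0 : e0 ⬝ᵥ star e0 = 1 := by simp [dotProduct, e0]

theorem e1_dotProduct_star_e1 : e1 ⬝ᵥ star e1 = 1 := by simp [dotProduct, e1]

theorem e0_dotProduct_star_e1 : e0 ⬝ᵥ star e1 = 0 := by simp [dotProduct, e0, e1]

theorem e1_dotProduct_star_e0 : e1 ⬝ᵥ star e0 = 0 := by simp [dotProduct, e0, e1]

theorem plusv_dotProduct_star_plusv : plusv ⬝ᵥ star plusv = 1 := by
  simp [dotProduct, plusv, ← sq, ofReal_sqrt_two_sq]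

theorem e0_dotProduct_star_plusv : e0 ⬝ᵥ star plusv = (Real.sqrt 2 : ℂ)⁻¹ := by
  simp [dotProduct, e0, plusv]

theorem plusv_dotProduct_star_e0 : plusv ⬝ᵥ star e0 = (Real.sqrt 2 : ℂ)⁻¹ := by
  simp [dotProduct, e0, plusv]

def ket2 (u v : Fin 2 → ℂ) : Fin 2 × Fin 2 → ℂ := fun x => u x.1 * v x.2

def ketBra2 (u v u' v' : Fin 2 → ℂ) : Matrix (Fin 2 × Fin 2) (Fin 2 × Fin 2) ℂ :=
  vecMulVec (ket2 u v) (star (ket2 u' v'))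

theorem star_ket3 (u v w : Fin 2 → ℂ) : star (ket3 u v w) = ket3 (star u) (star v) (star w) := by
  ext x; simp [ket3]

theorem ket3_dotProduct_ket3 (u v w u' v' w' : Fin 2 → ℂ) :
    ket3 u v w ⬝ᵥ ket3 u' v' w' = (u ⬝ᵥ u') * (v ⬝ᵥ v') * (w ⬝ᵥ w') := by
  simp only [dotProduct, ket3, Fintype.sum_prod_type, Fin.sum_univ_two]
  ring

theorem trace_vecMulVec_ket3 (u v w u' v' w' : Fin 2 → ℂ) :
    (vecMulVec (ket3 u v w) (star (ket3 u' v' w'))).trace =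
      (u ⬝ᵥ star u') * (v ⬝ᵥ star v') * (w ⬝ᵥ star w') := by
  rw [trace_vecMulVec, star_ket3, ket3_dotProduct_ket3]

section Marginals

variable (ρ σ : Matrix (Fin 2 × Fin 2 × Fin 2) (Fin 2 × Fin 2 × Fin 2) ℂ) (c : ℂ)

theorem margAB₁_add : margAB₁ (ρ + σ) = margAB₁ ρ + margAB₁ σ := by
  ext; simp [margAB₁, Finset.sum_add_distrib]

theorem margAB₁_sub : margAB₁ (ρ - σ) = margAB₁ ρ - margAB₁ σ := by
  ext; simp [margAB₁]

theorem margAB₁_smul : margAB₁ (c • ρ) = c • margAB₁ ρ := by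
  ext; simp [margAB₁, mul_add]

theorem margAB₂_add : margAB₂ (ρ + σ) = margAB₂ ρ + margAB₂ σ := by
  ext; simp [margAB₂, Finset.sum_add_distrib]

theorem margAB₂_sub : margAB₂ (ρ - σ) = margAB₂ ρ - margAB₂ σ := by
  ext; simp [margAB₂]

theorem margAB₂_smul : margAB₂ (c • ρ) = c • margAB₂ ρ := by
  ext; simp [margAB₂, mul_add]

end Marginals

theorem margAB₁_vecMulVec_ket3 (u v w u' v' w' : Fin 2 → ℂ) :
    margAB₁ (vecMulVec (ket3 u v w) (star (ket3 u' v' w'))) =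
      (w ⬝ᵥ star w') • ketBra2 u v u' v' := by
  ext x y
  simp only [margAB₁, ketBra2, vecMulVec_apply, ket3, ket2, Pi.star_apply, star_mul',
    Matrix.smul_apply, smul_eq_mul, dotProduct, Fin.sum_univ_two]
  ring

theorem margAB₂_vecMulVec_ket3 (u v w u' v' w' : Fin 2 → ℂ) :
    margAB₂ (vecMulVec (ket3 u v w) (star (ket3 u' v' w'))) =
      (v ⬝ᵥ star v') • ketBra2 u w u' w' := by
  ext x y
  simp only [margAB₂, ketBra2, vecMulVec_apply, ket3, ket2, Pi.star_apply, star_mul',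
    Matrix.smul_apply, smul_eq_mul, dotProduct, Fin.sum_univ_two]
  ring

theorem choiState_apply {A B : Type} [Fintype A] [DecidableEq A] [Fintype B] [DecidableEq B]
    (Λ : Matrix A A ℂ → Matrix B B ℂ) (a a' : A) (b b' : B) :
    choiState Λ (a, b) (a', b') = Λ ((Fintype.card A : ℂ)⁻¹ • single a a' 1) b b' := by
  simp only [choiState, maxEntProj]
  congr 2
  ext x x'
  by_cases h : a = x ∧ a' = x' <;> aesop

theorem choiState_Lambda1 :
    choiState Lambda1 = (1 / 2 : ℂ) • (ketBra2 e0 e0 e0 e0 + ketBra2 e1 plusv e1 plusv) := by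
  ext ⟨a, b⟩ ⟨a', b'⟩
  fin_cases a <;> fin_cases b <;> fin_cases a' <;> fin_cases b' <;>
    simp [choiState_apply, Lambda1, proj, ketBra2, ket2, e0, e1, plusv, vecMulVec_apply]

theorem choiState_Lambda2 (p : ℝ) :
    choiState (Lambda2 p) =
      (1 / 4 : ℂ) • (ketBra2 e0 e0 e0 e0 + ketBra2 e0 e1 e0 e1 +
          ketBra2 e1 e0 e1 e0 + ketBra2 e1 e1 e1 e1) +
        (((2 * p - 1) / 4 : ℝ) : ℂ) • (ketBra2 e0 e0 e1 e0 - ketBra2 e0 e1 e1 e1 +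
          (ketBra2 e1 e0 e0 e0 - ketBra2 e1 e1 e0 e1)) := by
  ext ⟨a, b⟩ ⟨a', b'⟩
  fin_cases a <;> fin_cases b <;> fin_cases a' <;> fin_cases b' <;>
    simp [choiState_apply, Lambda2, rhoPlus, rhoMinus, proj, ketBra2, ket2, e0, e1, plusv,
      minusv, vecMulVec_apply, dotProduct, mulVec, Fin.sum_univ_two] <;>
    field_simp <;> simp only [ofReal_sqrt_two_sq] <;> ring

theorem rhoBig_posSemidef (p : ℝ) (hp : |Real.sqrt 2 / 2 * (p - 1 / 2)| ≤ 1 / 4) :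
    (rhoBig p).PosSemidef := by
  have h₀ := posSemidef_smul_vecMulVec_add_smul_of_abs_le (ket3 e0 e0 e0) (ket3 e1 plusv e0)
    (a := 1 / 4) hp
  have h₁ := posSemidef_smul_vecMulVec_add_smul_of_abs_le (ket3 e0 e0 e1) (ket3 e1 plusv e1)
    (a := 1 / 4) (t := -(Real.sqrt 2 / 2 * (p - 1 / 2))) (by rwa [abs_neg])
  convert h₀.add h₁ using 1
  simp only [rhoBig, conjTranspose_sub, conjTranspose_vecMulVec, star_star]
  push_cast
  module

theorem rhoBig_trace (p : ℝ) : (rhoBig p).trace = 1 := by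
  simp only [rhoBig, conjTranspose_sub, conjTranspose_vecMulVec, star_star, trace_add, trace_sub,
    trace_smul, trace_vecMulVec_ket3, e0_dotProduct_star_e0, e1_dotProduct_star_e1,
    e0_dotProduct_star_e1, e1_dotProduct_star_e0, plusv_dotProduct_star_plusv]
  norm_num

theorem margAB₁_rhoBig (p : ℝ) :
    margAB₁ (rhoBig p) = (1 / 2 : ℂ) • (ketBra2 e0 e0 e0 e0 + ketBra2 e1 plusv e1 plusv) := by
  simp only [rhoBig, conjTranspose_sub, conjTranspose_vecMulVec, star_star, margAB₁_add,
    margAB₁_sub, margAB₁_smul, margAB₁_vecMulVec_ket3, e0_dotProduct_star_e0,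
    e1_dotProduct_star_e1, one_smul]
  module

theorem margAB₂_rhoBig (p : ℝ) :
    margAB₂ (rhoBig p) =
      (1 / 4 : ℂ) • (ketBra2 e0 e0 e0 e0 + ketBra2 e0 e1 e0 e1 +
          ketBra2 e1 e0 e1 e0 + ketBra2 e1 e1 e1 e1) +
        (((2 * p - 1) / 4 : ℝ) : ℂ) • (ketBra2 e0 e0 e1 e0 - ketBra2 e0 e1 e1 e1 +
          (ketBra2 e1 e0 e0 e0 - ketBra2 e1 e1 e0 e1)) := by
  simp only [rhoBig, conjTranspose_sub, conjTranspose_vecMulVec, star_star, margAB₂_add,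
    margAB₂_sub, margAB₂_smul, margAB₂_vecMulVec_ket3, e0_dotProduct_star_e0,
    plusv_dotProduct_star_plusv, e0_dotProduct_star_plusv, plusv_dotProduct_star_e0, one_smul]
  match_scalars <;> field_simp <;> ring

/-- Appendix B of the paper: for `p ∈ [1/2 − 1/(2√2), 1/2 + 1/(2√2)]`, the explicit
operator `ρ_{AB₁B₂}` is a density matrix whose marginals `ρ_{AB₁}` and `ρ_{AB₂}` are the
Choi states of `Λ₁` and `Λ₂`; hence `Λ₁` and `Λ₂` are compatible. -/
theorem lambda1_lambda2_compatible (p : ℝ)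
    (hp : p ∈ Set.Icc (1 / 2 - 1 / (2 * Real.sqrt 2)) (1 / 2 + 1 / (2 * Real.sqrt 2))) :
    (rhoBig p).PosSemidef ∧ (rhoBig p).trace = 1 ∧
      margAB₁ (rhoBig p) = choiState Lambda1 ∧
      margAB₂ (rhoBig p) = choiState (Lambda2 p) :=
  ⟨rhoBig_posSemidef p (abs_sqrt_two_div_two_mul_sub_half_le hp), rhoBig_trace p,
    (margAB₁_rhoBig p).trans choiState_Lambda1.symm,
    (margAB₂_rhoBig p).trans (choiState_Lambda2 p).symm⟩
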